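/- Let Φ be an m×N matrix, ‖·‖_V a norm on ℝ^N, ‖·‖_Z a norm on ℝ^m. Suppose S(α): ‖Φu‖_Z ≤ α‖u‖_V for all u ∈ ℝ^N, and IS(2n,μ): ‖v‖_V ≤ μ‖Φv‖_Z for all 2n-sparse v. Then Φ satisfies the null space property of order 2n with constant 1+αμ: for every v in the null space of Φ, ‖v‖_V ≤ (1+αμ)·e_{2n}(v)_V. -/

import Mathlib

/-! For `v` in the null space, `Φ ṽ = -Φ (v - ṽ)` for every sparse `ṽ`; inverse stability applied to
`ṽ` and stability applied to `v - ṽ` give `‖ṽ‖ ≤ αμ ‖v - ṽ‖`, so the triangle inequality yields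
`‖v‖ ≤ (1 + αμ) ‖v - ṽ‖`, and one takes the infimum over `ṽ`. -/

noncomputable section

/-- The best `k`-term (sparse) approximation error `e_k(u)_V` of `u ∈ ℝ^N`. -/
def bestTermErr {N : ℕ} (normV : (Fin N → ℝ) → ℝ) (k : ℕ) (u : Fin N → ℝ) : ℝ :=
  sInf {r : ℝ | ∃ v : Fin N → ℝ, {i | v i ≠ 0}.ncard ≤ k ∧ r = normV (u - v)}

lemma apply_neg_of_abs_smul {F : Type*} [AddCommGroup F] [Module ℝ F] {Z : F → ℝ}
    (hZsmul : ∀ (a : ℝ) x, Z (a • x) = |a| * Z x) (y : F) : Z (-y) = Z y := by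
  simpa using hZsmul (-1) y

lemma le_one_add_mul_sub_of_map_eq_zero {E F : Type*} [AddCommGroup E] [AddCommGroup F]
    (f : E →+ F) {normV : E → ℝ} {Z : F → ℝ}
    (hVadd : ∀ x y, normV (x + y) ≤ normV x + normV y) (hZneg : ∀ y, Z (-y) = Z y)
    {α μ : ℝ} (hμ : 0 ≤ μ) (hS : ∀ u, Z (f u) ≤ α * normV u)
    {v w : E} (hv : f v = 0) (hw : normV w ≤ μ * Z (f w)) :
    normV v ≤ (1 + α * μ) * normV (v - w) := by
  have hfw : Z (f w) = Z (f (v - w)) := by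
    rw [map_sub, hv, zero_sub, hZneg]
  have hw' : normV w ≤ α * μ * normV (v - w) :=
    calc normV w ≤ μ * Z (f (v - w)) := hfw ▸ hw
      _ ≤ μ * (α * normV (v - w)) := mul_le_mul_of_nonneg_left (hS _) hμ
      _ = α * μ * normV (v - w) := by ring
  calc normV v = normV (v - w + w) := by rw [sub_add_cancel]
    _ ≤ normV (v - w) + normV w := hVadd _ _
    _ ≤ (1 + α * μ) * normV (v - w) := by linarith

lemma le_mul_bestTermErr {N : ℕ} {normV : (Fin N → ℝ) → ℝ} {k : ℕ} {u : Fin N → ℝ} {x c : ℝ}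
    (hc : 0 < c) (h : ∀ w : Fin N → ℝ, {i | w i ≠ 0}.ncard ≤ k → x ≤ c * normV (u - w)) :
    x ≤ c * bestTermErr normV k u := by
  rw [← div_le_iff₀' hc]
  refine le_csInf ⟨normV (u - 0), 0, by simp, rfl⟩ ?_
  rintro r ⟨w, hw, rfl⟩
  rw [div_le_iff₀' hc]
  exact h w hw

theorem stability_implies_null_space_property_general
    {m N : ℕ} (Φ : Matrix (Fin m) (Fin N) ℝ) (n : ℕ)
    (normV : (Fin N → ℝ) → ℝ)
    (hVadd : ∀ x y, normV (x + y) ≤ normV x + normV y)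
    (Z : (Fin m → ℝ) → ℝ)
    (hZsmul : ∀ (a : ℝ) x, Z (a • x) = |a| * Z x)
    (α μ : ℝ) (hα : 0 < α) (hμ : 0 < μ)
    (hS : ∀ u : Fin N → ℝ, Z (Φ.mulVec u) ≤ α * normV u)
    (hIS : ∀ v : Fin N → ℝ, {i | v i ≠ 0}.ncard ≤ 2 * n → normV v ≤ μ * Z (Φ.mulVec v)) :
    ∀ v : Fin N → ℝ, Φ.mulVec v = 0 →
      normV v ≤ (1 + α * μ) * bestTermErr normV (2 * n) v := by
  intro v hv
  refine le_mul_bestTermErr (by positivity) fun w hw => ?_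
  exact le_one_add_mul_sub_of_map_eq_zero Φ.mulVecLin.toAddMonoidHom hVadd
    (apply_neg_of_abs_smul hZsmul) hμ.le hS hv (hIS w hw)

/-- **Stability and inverse stability imply the null space property** (first half of
Theorem 6.2): if `‖Φu‖_Z ≤ α‖u‖_V` for all `u` and `‖v‖_V ≤ μ‖Φv‖_Z` for all
`2n`-sparse `v`, then `Φ` satisfies `NSP(2n, 1 + αμ)`:
`‖v‖_V ≤ (1 + αμ)·e_{2n}(v)_V` for all `v` in the null space of `Φ`. -/
theorem stability_implies_null_space_property
    {m N : ℕ} (Φ : Matrix (Fin m) (Fin N) ℝ) (n : ℕ)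
    (normV : (Fin N → ℝ) → ℝ)
    (hVadd : ∀ x y, normV (x + y) ≤ normV x + normV y)
    (hVsmul : ∀ (a : ℝ) x, normV (a • x) = |a| * normV x)
    (hVdef : ∀ x, normV x = 0 ↔ x = 0)
    (Z : (Fin m → ℝ) → ℝ)
    (hZadd : ∀ x y, Z (x + y) ≤ Z x + Z y)
    (hZsmul : ∀ (a : ℝ) x, Z (a • x) = |a| * Z x)
    (hZdef : ∀ x, Z x = 0 ↔ x = 0)
    (α μ : ℝ) (hα : 0 < α) (hμ : 0 < μ)
    (hS : ∀ u : Fin N → ℝ, Z (Φ.mulVec u) ≤ α * normV u)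
    (hIS : ∀ v : Fin N → ℝ, {i | v i ≠ 0}.ncard ≤ 2 * n → normV v ≤ μ * Z (Φ.mulVec v)) :
    ∀ v : Fin N → ℝ, Φ.mulVec v = 0 →
      normV v ≤ (1 + α * μ) * bestTermErr normV (2 * n) v :=
  stability_implies_null_space_property_general Φ n normV hVadd Z hZsmul α μ hα hμ hS hIS

end
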